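/- The separation profile of the infinite Sierpiński graph S satisfies sep^{1/2}_S(n) ≼ n^{log 2 / log 6}: there exists a constant C > 0 such that for all n ≥ 1, sep^{1/2}_S(n) ≤ C·n^{log 2 / log 6}. -/

import Mathlib

open scoped Classical

/-- Reachability within the subgraph of `X` induced on a vertex set `s`. -/
def SimpleGraph.ReachIn {V : Type*} (X : SimpleGraph V) (s : Set V) (v w : V) : Prop :=
  ∃ (hv : v ∈ s) (hw : w ∈ s), (X.induce s).Reachable ⟨v, hv⟩ ⟨w, hw⟩

/-- The vertex set of the connected component of `v` in the subgraph of `X` induced on `s`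
(empty if `v ∉ s`). -/
def SimpleGraph.compIn {V : Type*} (X : SimpleGraph V) (s : Set V) (v : V) : Set V :=
  {w | X.ReachIn s v w}

/-- `T` is a vertex set witnessing `cut¹ᐟ²` for the subgraph of `X` induced on the finite
vertex set `G`: after removing `T` from `G`, every connected component has at most
`|G|/2` vertices. -/
def IsHalfCutSet {V : Type*} (X : SimpleGraph V) (G T : Finset V) : Prop :=
  T ⊆ G ∧ ∀ v : V, 2 * (X.compIn (↑(G \ T)) v).ncard ≤ G.card

/-- `cut¹ᐟ²` of the subgraph of `X` induced on the finite vertex set `G`: the least size of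
a vertex set whose removal leaves all connected components of size at most `|G|/2`. -/
noncomputable def cutHalf {V : Type*} (X : SimpleGraph V) (G : Finset V) : ℕ :=
  sInf {t | ∃ T : Finset V, IsHalfCutSet X G T ∧ T.card = t}

/-- The `1/2`-separation profile of `X`, over finite subgraphs with vertex set inside `W`. -/
noncomputable def sepHalf {V : Type*} (X : SimpleGraph V) (W : Set V) (n : ℕ) : ℕ :=
  sSup {c | ∃ G : Finset V, ↑G ⊆ W ∧ G.card ≤ n ∧ c = cutHalf X G}

/-- The `i`-th digit of `x` in base `b`. -/
def digit (b i x : ℕ) : ℕ := x / b ^ i % b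

/-- Membership in the vertex set of the infinite Sierpinski graph: no position at which
both coordinates have base-3 digit `1`. -/
def SierpMem (p : ℕ × ℕ) : Prop :=
  ∀ i : ℕ, ¬(digit 3 i p.1 = 1 ∧ digit 3 i p.2 = 1)

/-- The infinite Sierpinski graph `S`, with edges between valid points at `ℓ¹`-distance 1. -/
def SierpGraph : SimpleGraph (ℕ × ℕ) where
  Adj p q := SierpMem p ∧ SierpMem q ∧ |(p.1 : ℤ) - q.1| + |(p.2 : ℤ) - q.2| = 1
  symm := by
    constructor
    rintro p q ⟨hp, hq, h⟩
    exact ⟨hq, hp, by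
      rw [abs_sub_comm (q.1 : ℤ) (p.1 : ℤ), abs_sub_comm (q.2 : ℤ) (p.2 : ℤ)]; exact h⟩
  loopless := by constructor; rintro p ⟨-, -, h⟩; simp at h

/-- The vertex set of the sphere `Γ_k`. -/
noncomputable def GammaV (k : ℕ) : Finset (ℕ × ℕ) :=
  (Finset.range (3 ^ k) ×ˢ Finset.range (3 ^ k)).filter SierpMem

/-- The intersection of the vertical line `V_x` with `Γ_k`. -/
def VlineSet (k x : ℕ) : Set (ℕ × ℕ) := {p | p ∈ GammaV k ∧ p.1 = x}

/-- The intersection of the horizontal line `H_y` with `Γ_k`. -/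
def HlineSet (k y : ℕ) : Set (ℕ × ℕ) := {p | p ∈ GammaV k ∧ p.2 = y}

/-- The vertical line `V_x` is complete in `Γ_k`: its intersection with `Γ_k` is connected. -/
def CompleteV (k x : ℕ) : Prop := (SierpGraph.induce (VlineSet k x)).Connected

/-- The horizontal line `H_y` is complete in `Γ_k`: its intersection with `Γ_k` is connected. -/
def CompleteH (k y : ℕ) : Prop := (SierpGraph.induce (HlineSet k y)).Connected

/-- The vertex set of the complete-lines subgraph `C_k` of `Γ_k`. -/
noncomputable def CkV (k : ℕ) : Finset (ℕ × ℕ) :=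
  (GammaV k).filter fun p => CompleteV k p.1 ∨ CompleteH k p.2


/-!
Let `G` be a finite set of `m` vertices of `S`. Only one component of `G` can have more than
`m/2` vertices, and being connected it fits in a box of side `3^m`. Inside a box of side
`3^(i+1)`, cut along the vertical and horizontal lines of mesh `3^i` whose residue class mod
`3^i` carries the fewest points of `G`. That residue class is no heavier than the average,
`m/3^i`, nor than the class of `11…1` (base 3): on such a line every point of `S` has no
digit `1` in the last `i` digits of its other coordinate, so the box meets it in `O(2^i)`
points. A connected set avoiding the cut lies in a sub-box of side `3^i`; at most one sub-box
holds more than `m/2` points, and we recurse into it. The total cost is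
`∑ₜ min(2^t, m/3^t) = O(2^(log₆ m)) = O(m^(log 2 / log 6))`.
-/

open Finset

def ternaryRepunit : ℕ → ℕ
  | 0 => 0
  | i + 1 => 3 * ternaryRepunit i + 1

lemma ternaryRepunit_lt_pow (i : ℕ) : ternaryRepunit i < 3 ^ i := by
  induction i with
  | zero => simp [ternaryRepunit]
  | succ i ih => rw [pow_succ, ternaryRepunit]; omega

lemma digit_ternaryRepunit {t i : ℕ} (h : t < i) : digit 3 t (ternaryRepunit i) = 1 := by
  induction i generalizing t with
  | zero => omega
  | succ i ih =>
    cases t with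
    | zero => simp [digit, ternaryRepunit]
    | succ t =>
      have hdiv : (3 * ternaryRepunit i + 1) / 3 ^ (t + 1) = ternaryRepunit i / 3 ^ t := by
        rw [pow_succ', ← Nat.div_div_eq_div_mul]
        congr 1
        omega
      rw [digit, ternaryRepunit, hdiv]
      exact ih (by omega)

lemma digit_mod_pow {b t k : ℕ} (x : ℕ) (h : t < k) : digit b t (x % b ^ k) = digit b t x := by
  rw [digit, digit, show k = t + (k - t) by omega, pow_add, Nat.mod_mul_right_div_self]
  exact Nat.mod_mod_of_dvd _ (dvd_pow_self b (by omega))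

def noOneDigits (i : ℕ) : Finset ℕ :=
  {d ∈ range (3 ^ i) | ∀ t < i, digit 3 t d ≠ 1}

lemma card_noOneDigits_le (i : ℕ) : #(noOneDigits i) ≤ 2 ^ i := by
  induction i with
  | zero => exact (card_le_card (filter_subset _ _)).trans (by simp)
  | succ i ih =>
    have hsub : noOneDigits (i + 1) ⊆
        (({0, 2} : Finset ℕ) ×ˢ noOneDigits i).image fun e => e.1 * 3 ^ i + e.2 := by
      intro d hd
      simp only [noOneDigits, mem_filter, mem_range] at hd
      obtain ⟨hlt, hdig⟩ := hd
      have htop : d / 3 ^ i < 3 := by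
        rw [Nat.div_lt_iff_lt_mul (by positivity)]
        rwa [pow_succ, mul_comm] at hlt
      have htop_ne : d / 3 ^ i ≠ 1 := by
        simpa [digit, Nat.mod_eq_of_lt htop] using hdig i (by omega)
      have htop' : d / 3 ^ i = 0 ∨ d / 3 ^ i = 2 := by
        generalize d / 3 ^ i = e at htop htop_ne; omega
      refine mem_image.2
        ⟨(d / 3 ^ i, d % 3 ^ i), mem_product.2 ⟨?_, ?_⟩, Nat.div_add_mod' d _⟩
      · simpa only [mem_insert, mem_singleton] using htop'
      · simp only [noOneDigits, mem_filter, mem_range]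
        exact ⟨Nat.mod_lt _ (by positivity), fun t ht => by
          rw [digit_mod_pow d ht]; exact hdig t (by omega)⟩
    calc #(noOneDigits (i + 1)) ≤ #(({0, 2} : Finset ℕ) ×ˢ noOneDigits i) :=
          (card_le_card hsub).trans card_image_le
      _ ≤ 2 ^ (i + 1) := by rw [card_product, card_pair (by norm_num), pow_succ]; omega

def inBox (i a b : ℕ) (p : ℕ × ℕ) : Prop :=
  a ≤ p.1 ∧ p.1 < a + 3 ^ i ∧ b ≤ p.2 ∧ p.2 < b + 3 ^ i

lemma div_pow_le_div_add_three {u c i : ℕ} (h : u < c + 3 ^ (i + 1)) :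
    u / 3 ^ i ≤ c / 3 ^ i + 3 :=
  calc u / 3 ^ i ≤ (c + 3 * 3 ^ i) / 3 ^ i := Nat.div_le_div_right (by rw [pow_succ] at h; omega)
    _ = c / 3 ^ i + 3 := Nat.add_mul_div_right _ _ (by positivity)

/-- `x / 3^i` and `y / 3^i` take four values each in the box, and `y % 3^i` has no digit `1`. -/
lemma card_filter_fst_mod_eq_ternaryRepunit_le {G : Finset (ℕ × ℕ)} {i a b : ℕ}
    (hS : ∀ p ∈ G, SierpMem p) (hbox : ∀ p ∈ G, inBox (i + 1) a b p) :
    #{p ∈ G | p.1 % 3 ^ i = ternaryRepunit i} ≤ 16 * 2 ^ i := by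
  have hmaps : Set.MapsTo (fun p : ℕ × ℕ => ((p.1 / 3 ^ i, p.2 / 3 ^ i), p.2 % 3 ^ i))
      ↑{p ∈ G | p.1 % 3 ^ i = ternaryRepunit i}
      ↑((Icc (a / 3 ^ i) (a / 3 ^ i + 3) ×ˢ Icc (b / 3 ^ i) (b / 3 ^ i + 3)) ×ˢ
        noOneDigits i) := by
    intro p hp
    simp only [coe_filter, Set.mem_ofPred_eq] at hp
    obtain ⟨hpG, hline⟩ := hp
    obtain ⟨hax, hxa, hby, hyb⟩ := hbox p hpG
    simp only [coe_product, Set.mem_prod, coe_Icc, Set.mem_Icc, noOneDigits, coe_filter,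
      mem_range, Set.mem_ofPred_eq]
    refine ⟨⟨⟨Nat.div_le_div_right hax, div_pow_le_div_add_three hxa⟩,
      Nat.div_le_div_right hby, div_pow_le_div_add_three hyb⟩,
      Nat.mod_lt _ (by positivity), fun t ht hy => hS p hpG t ⟨?_, ?_⟩⟩
    · rw [← digit_mod_pow p.1 ht, hline, digit_ternaryRepunit ht]
    · rwa [← digit_mod_pow p.2 ht]
  have hinj : Set.InjOn (fun p : ℕ × ℕ => ((p.1 / 3 ^ i, p.2 / 3 ^ i), p.2 % 3 ^ i))
      ↑{p ∈ G | p.1 % 3 ^ i = ternaryRepunit i} := by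
    intro p hp q hq hpq
    simp only [coe_filter, Set.mem_ofPred_eq] at hp hq
    simp only [Prod.mk.injEq] at hpq
    obtain ⟨⟨h1, h2⟩, h3⟩ := hpq
    ext
    · rw [← Nat.div_add_mod p.1 (3 ^ i), ← Nat.div_add_mod q.1 (3 ^ i), h1, hp.2, hq.2]
    · rw [← Nat.div_add_mod p.2 (3 ^ i), ← Nat.div_add_mod q.2 (3 ^ i), h2, h3]
  calc _ ≤ _ := card_le_card_of_injOn _ hmaps hinj
    _ ≤ 4 * 4 * 2 ^ i := by
      have h4 (c : ℕ) : c + 3 + 1 - c = 4 := by omega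
      rw [card_product, card_product, Nat.card_Icc, Nat.card_Icc, h4, h4]
      exact Nat.mul_le_mul_left _ (card_noOneDigits_le i)
    _ = 16 * 2 ^ i := by norm_num

lemma card_filter_snd_mod_eq_ternaryRepunit_le {G : Finset (ℕ × ℕ)} {i a b : ℕ}
    (hS : ∀ p ∈ G, SierpMem p) (hbox : ∀ p ∈ G, inBox (i + 1) a b p) :
    #{p ∈ G | p.2 % 3 ^ i = ternaryRepunit i} ≤ 16 * 2 ^ i := by
  have hS' : ∀ p ∈ G.map (Equiv.prodComm ℕ ℕ).toEmbedding, SierpMem p := by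
    simp only [mem_map_equiv, Equiv.prodComm_symm, Equiv.prodComm_apply]
    exact fun p hp t ht => hS _ hp t ht.symm
  have hbox' : ∀ p ∈ G.map (Equiv.prodComm ℕ ℕ).toEmbedding, inBox (i + 1) b a p := by
    simp only [mem_map_equiv, Equiv.prodComm_symm, Equiv.prodComm_apply]
    exact fun p hp => by obtain ⟨h1, h2, h3, h4⟩ := hbox _ hp; exact ⟨h3, h4, h1, h2⟩
  have h := card_filter_fst_mod_eq_ternaryRepunit_le hS' hbox'
  rwa [filter_map, card_map] at h

lemma exists_mod_eq_card_filter_le {α : Type*} (s : Finset α) (f : α → ℕ) {q : ℕ}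
    (hq : 0 < q) :
    ∃ r < q, q * #{x ∈ s | f x % q = r} ≤ #s ∧
      ∀ r' < q, #{x ∈ s | f x % q = r} ≤ #{x ∈ s | f x % q = r'} := by
  obtain ⟨r, hr, hmin⟩ := exists_min_image (range q) (fun r => #{x ∈ s | f x % q = r})
    ⟨0, mem_range.2 hq⟩
  refine ⟨r, mem_range.1 hr, ?_, fun r' hr' => hmin r' (mem_range.2 hr')⟩
  calc q * #{x ∈ s | f x % q = r} = #(range q) • #{x ∈ s | f x % q = r} := by simp
    _ ≤ ∑ r' ∈ range q, #{x ∈ s | f x % q = r'} := card_nsmul_le_sum _ _ _ hmin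
    _ = #s := (card_eq_sum_card_fiberwise fun x _ => mem_range.2 (Nat.mod_lt _ hq)).symm

lemma exists_forall_ne_two_mul_card_filter_le {α β : Type*} [Nonempty β] [DecidableEq β]
    (s : Finset α) (f : α → β) :
    ∃ b₀, ∀ b ≠ b₀, 2 * #{x ∈ s | f x = b} ≤ #s := by
  by_cases hheavy : ∃ b₀, #s < 2 * #{x ∈ s | f x = b₀}
  · obtain ⟨b₀, hb₀⟩ := hheavy
    refine ⟨b₀, fun b hb => ?_⟩
    have hsub : {x ∈ s | f x = b} ⊆ {x ∈ s | ¬f x = b₀} :=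
      monotone_filter_right s fun x _ hx h => hb (hx ▸ h)
    have := card_filter_add_card_filter_not (s := s) (fun x => f x = b₀)
    have := card_le_card hsub
    omega
  · push Not at hheavy
    exact ⟨Classical.arbitrary β, fun b _ => hheavy b⟩

/-- The start of the interval `[c, c + q)`, `c ≡ r (mod q)`, containing `x` (or `0` if `x < r`):
cutting `ℕ` at the residue class `r` leaves these intervals as pieces. -/
def gridStart (q r x : ℕ) : ℕ := (x + (q - r)) / q * q + r - q

lemma gridStart_le {q r : ℕ} (hr : r ≤ q) (x : ℕ) : gridStart q r x ≤ x := by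
  have := Nat.div_mul_le_self (x + (q - r)) q
  rw [gridStart]
  omega

lemma lt_gridStart_add {q : ℕ} (hq : 0 < q) (r x : ℕ) : x < gridStart q r x + q := by
  have := Nat.lt_div_mul_add (a := x + (q - r)) hq
  rw [gridStart]
  omega

lemma exists_mod_eq_of_gridStart_ne {q r x y : ℕ} (hq : 0 < q) (hr : r < q) (hxy : x ≤ y)
    (hne : gridStart q r x ≠ gridStart q r y) : ∃ c, x < c ∧ c ≤ y ∧ c % q = r := by
  have hx := Nat.lt_div_mul_add (a := x + (q - r)) hq
  have hy := Nat.div_mul_le_self (y + (q - r)) q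
  have hlt : (x + (q - r)) / q < (y + (q - r)) / q := lt_of_le_of_ne
    (Nat.div_le_div_right (by omega)) fun h => hne (by rw [gridStart, gridStart, h])
  have hstep := Nat.mul_le_mul_right q hlt
  refine ⟨(x + (q - r)) / q * q + r, ?_, ?_, Nat.mul_add_mod_of_lt hr⟩ <;>
  · rw [Nat.succ_mul] at hstep
    generalize (x + (q - r)) / q * q = X at *
    generalize (y + (q - r)) / q * q = Y at *
    omega

def cutBudget (m i : ℕ) : ℕ := ∑ t ∈ range i, min (16 * 2 ^ t) (m / 3 ^ t)

lemma sum_range_div_pow_le {b : ℕ} (hb : 2 ≤ b) (k u : ℕ) :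
    ∑ s ∈ range k, u / b ^ s ≤ 2 * u := by
  induction k generalizing u with
  | zero => simp
  | succ k ih =>
    rw [sum_range_succ']
    simp only [pow_succ', ← Nat.div_div_eq_div_mul, pow_zero, Nat.div_one]
    have := ih (u / b)
    have := (Nat.le_div_iff_mul_le (by omega)).1 (le_refl (u / b))
    nlinarith

/-- The terms `16 · 2^t` dominate below `J`, the terms `m / 3^t < 2^J / 3^(t - J)` above it. -/
lemma cutBudget_le {m J : ℕ} (hJ : m < 6 ^ J) (i : ℕ) : cutBudget m i ≤ 18 * 2 ^ J := by
  have hhead : ∑ t ∈ range J, min (16 * 2 ^ t) (m / 3 ^ t) < 16 * 2 ^ J :=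
    calc _ ≤ ∑ t ∈ range J, 16 * 2 ^ t := sum_le_sum fun t _ => min_le_left _ _
      _ = 16 * ∑ t ∈ range J, 2 ^ t := (mul_sum _ _ _).symm
      _ < 16 * 2 ^ J := by
        have := Nat.geomSum_lt (le_refl 2) (s := range J) fun k hk => mem_range.1 hk
        omega
  have htail : ∑ s ∈ range i, min (16 * 2 ^ (J + s)) (m / 3 ^ (J + s)) ≤ 2 * 2 ^ J :=
    calc _ ≤ ∑ s ∈ range i, m / 3 ^ J / 3 ^ s := sum_le_sum fun s _ =>
          (min_le_right _ _).trans_eq (by rw [pow_add, Nat.div_div_eq_div_mul])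
      _ ≤ 2 * (m / 3 ^ J) := sum_range_div_pow_le (by norm_num) _ _
      _ ≤ 2 * 2 ^ J := by
        have : m < 2 ^ J * 3 ^ J := by rwa [← mul_pow]
        have := (Nat.div_lt_iff_lt_mul (by positivity)).2 this
        omega
  calc cutBudget m i ≤ ∑ t ∈ range (J + i), min (16 * 2 ^ t) (m / 3 ^ t) :=
        sum_le_sum_of_subset (range_subset_range.2 (by omega))
    _ ≤ 18 * 2 ^ J := by rw [sum_range_add]; omega

namespace SimpleGraph

variable {V : Type*} {X : SimpleGraph V}

section Crossing

variable {f : V → ℕ}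

lemma Walk.exists_mem_support_eq (hf : ∀ a b, X.Adj a b → f b ≤ f a + 1) {u v : V}
    (W : X.Walk u v) {c : ℕ} (hu : f u ≤ c) (hv : c ≤ f v) :
    ∃ z ∈ W.support, f z = c := by
  induction W with
  | nil => exact ⟨_, List.mem_singleton_self _, le_antisymm hu hv⟩
  | @cons a b _ hab W ih =>
    by_cases hb : f b ≤ c
    · obtain ⟨z, hz, hzc⟩ := ih hb hv
      exact ⟨z, List.mem_cons_of_mem _ hz, hzc⟩
    · exact ⟨a, List.mem_cons_self, by have := hf a b hab; omega⟩

lemma exists_mem_eq_of_preconnected (hf : ∀ a b, X.Adj a b → f b ≤ f a + 1) {A : Set V}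
    (hA : (X.induce A).Preconnected) {p q : V} (hp : p ∈ A) (hq : q ∈ A) {c : ℕ}
    (hpc : f p ≤ c) (hcq : c ≤ f q) : ∃ z ∈ A, f z = c := by
  obtain ⟨W⟩ := hA ⟨p, hp⟩ ⟨q, hq⟩
  obtain ⟨z, -, hz⟩ := W.exists_mem_support_eq (f := f ∘ Subtype.val)
    (fun a b hab => hf a.1 b.1 hab) hpc hcq
  exact ⟨z, z.2, hz⟩

lemma lt_add_ncard_of_preconnected (hf : ∀ a b, X.Adj a b → f b ≤ f a + 1) {A : Set V}
    (hA : (X.induce A).Preconnected) (hAfin : A.Finite) {p q : V} (hp : p ∈ A) (hq : q ∈ A) :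
    f q < f p + A.ncard := by
  rcases le_or_gt (f q) (f p) with hqp | hpq
  · have := (Set.ncard_pos hAfin).2 ⟨p, hp⟩
    omega
  · have hsub : Set.Icc (f p) (f q) ⊆ f '' A := fun c hc =>
      exists_mem_eq_of_preconnected hf hA hp hq hc.1 hc.2
    have := (Set.ncard_le_ncard hsub (hAfin.image f)).trans (Set.ncard_image_le hAfin)
    rw [Set.ncard_Icc_nat] at this
    omega

lemma exists_forall_le_lt_add_ncard_of_preconnected (hf : ∀ a b, X.Adj a b → f b ≤ f a + 1)
    {A : Set V} (hA : (X.induce A).Preconnected) (hAfin : A.Finite) :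
    ∃ a, ∀ p ∈ A, a ≤ f p ∧ f p < a + A.ncard := by
  rcases A.eq_empty_or_nonempty with rfl | hne
  · exact ⟨0, by simp⟩
  obtain ⟨p₀, hp₀, hmin⟩ := Set.exists_min_image A f hAfin hne
  exact ⟨f p₀, fun p hp => ⟨hmin p hp, lt_add_ncard_of_preconnected hf hA hAfin hp₀ hp⟩⟩

lemma gridStart_eq_of_preconnected (hf : ∀ a b, X.Adj a b → f b ≤ f a + 1) {A : Set V}
    (hA : (X.induce A).Preconnected) {q r : ℕ} (hq : 0 < q) (hr : r < q)
    (havoid : ∀ z ∈ A, f z % q ≠ r) {p z : V} (hp : p ∈ A) (hz : z ∈ A) :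
    gridStart q r (f z) = gridStart q r (f p) := by
  wlog hzp : f z ≤ f p generalizing p z
  · exact (this hz hp (by omega)).symm
  by_contra hne
  obtain ⟨c, hzc, hcp, hc⟩ := exists_mod_eq_of_gridStart_ne hq hr hzp hne
  obtain ⟨u, hu, rfl⟩ := exists_mem_eq_of_preconnected hf hA hz hp hzc.le hcp
  exact havoid u hu hc

end Crossing

lemma compIn_subset (s : Set V) (v : V) : X.compIn s v ⊆ s := fun _ ⟨_, hw, _⟩ => hw

lemma compIn_mono {s t : Set V} (hst : s ⊆ t) (v : V) : X.compIn s v ⊆ X.compIn t v :=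
  fun _ ⟨hv, hw, hvw⟩ => ⟨hst hv, hst hw, hvw.map (X.induceHomOfLE hst).toHom⟩

lemma compIn_eq_of_mem {s : Set V} {v w : V} (hw : w ∈ X.compIn s v) :
    X.compIn s w = X.compIn s v := by
  obtain ⟨hv, hws, hvw⟩ := hw
  ext u
  exact ⟨fun ⟨_, hu, hwu⟩ => ⟨hv, hu, hvw.trans hwu⟩,
    fun ⟨_, hu, hvu⟩ => ⟨hws, hu, hvw.symm.trans hvu⟩⟩

lemma preconnected_induce_compIn (s : Set V) (v : V) :
    (X.induce (X.compIn s v)).Preconnected := by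
  have hreach : ∀ w (hw : w ∈ X.compIn s v),
      (X.induce (X.compIn s v)).Reachable ⟨v, ⟨hw.1, hw.1, .rfl⟩⟩ ⟨w, hw⟩ := by
    rintro w ⟨hv, hws, ⟨W⟩⟩
    have hsupp : ∀ z ∈ (W.map (Embedding.induce s).toHom).support, z ∈ X.compIn s v := by
      intro z hz
      rw [Walk.support_map, List.mem_map] at hz
      obtain ⟨z, hz, rfl⟩ := hz
      exact ⟨hv, z.2, ⟨W.takeUntil z hz⟩⟩
    exact ⟨(W.map (Embedding.induce s).toHom).induce _ hsupp⟩
  rintro ⟨x, hx⟩ ⟨y, hy⟩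
  exact (hreach x hx).symm.trans (hreach y hy)

lemma compIn_eq_of_lt_two_mul_ncard {G : Finset V} {v w : V}
    (hv : G.card < 2 * (X.compIn G v).ncard) (hw : G.card < 2 * (X.compIn G w).ncard) :
    X.compIn G v = X.compIn G w := by
  by_cases hdisj : Disjoint (X.compIn G v) (X.compIn G w)
  · have := Set.ncard_le_ncard (Set.union_subset (X.compIn_subset G v) (X.compIn_subset G w))
      G.finite_toSet
    rw [Set.ncard_union_eq hdisj ((G.finite_toSet).subset (X.compIn_subset G v))
      ((G.finite_toSet).subset (X.compIn_subset G w)), Set.ncard_coe_finset] at this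
    omega
  · obtain ⟨z, hzv, hzw⟩ := Set.not_disjoint_iff.1 hdisj
    rw [← compIn_eq_of_mem hzv, ← compIn_eq_of_mem hzw]

lemma exists_forall_lt_two_mul_ncard_compIn_eq [Nonempty V] (X : SimpleGraph V)
    (G : Finset V) : ∃ v₀, ∀ v, G.card < 2 * (X.compIn G v).ncard →
      X.compIn G v = X.compIn G v₀ := by
  by_cases hheavy : ∃ v₀, G.card < 2 * (X.compIn G v₀).ncard
  · obtain ⟨v₀, hv₀⟩ := hheavy
    exact ⟨v₀, fun v hv => compIn_eq_of_lt_two_mul_ncard hv hv₀⟩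
  · exact ⟨Classical.arbitrary V, fun v hv => absurd ⟨v, hv⟩ hheavy⟩

end SimpleGraph

lemma cutHalf_le_card_of_isHalfCutSet {V : Type*} {X : SimpleGraph V} {G T : Finset V}
    (h : IsHalfCutSet X G T) : cutHalf X G ≤ T.card :=
  Nat.sInf_le ⟨T, h, rfl⟩

lemma isHalfCutSet_self {V : Type*} (X : SimpleGraph V) (G : Finset V) : IsHalfCutSet X G G := by
  refine ⟨subset_refl G, fun v => ?_⟩
  have : X.compIn ∅ v = ∅ := Set.eq_empty_of_subset_empty (X.compIn_subset ∅ v)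
  simp [this]

lemma isHalfCutSet_of_forall_preconnected {V : Type*} {X : SimpleGraph V} {G T : Finset V}
    (hTG : T ⊆ G) (v₀ : V)
    (hv₀ : ∀ v, G.card < 2 * (X.compIn G v).ncard → X.compIn G v = X.compIn G v₀)
    (hT : ∀ A ⊆ X.compIn G v₀, A ⊆ ↑G \ ↑T → (X.induce A).Preconnected →
      2 * A.ncard ≤ G.card) :
    IsHalfCutSet X G T := by
  refine ⟨hTG, fun v => ?_⟩
  have hsub : X.compIn ↑(G \ T) v ⊆ X.compIn G v := X.compIn_mono (by simp) v
  by_cases hheavy : G.card < 2 * (X.compIn G v).ncard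
  · rw [hv₀ v hheavy] at hsub
    exact hT _ hsub (by simpa using X.compIn_subset _ v) (X.preconnected_induce_compIn _ v)
  · have := Set.ncard_le_ncard hsub ((G.finite_toSet).subset (X.compIn_subset G v))
    omega

lemma sierpGraph_adj_fst_le {p q : ℕ × ℕ} (h : SierpGraph.Adj p q) : q.1 ≤ p.1 + 1 := by
  obtain ⟨-, -, h⟩ := h
  have := abs_nonneg ((p.2 : ℤ) - q.2)
  have := neg_abs_le ((p.1 : ℤ) - q.1)
  omega

lemma sierpGraph_adj_snd_le {p q : ℕ × ℕ} (h : SierpGraph.Adj p q) : q.2 ≤ p.2 + 1 := by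
  obtain ⟨-, -, h⟩ := h
  have := abs_nonneg ((p.1 : ℤ) - q.1)
  have := neg_abs_le ((p.2 : ℤ) - q.2)
  omega

lemma exists_gridLines_card_le {G : Finset (ℕ × ℕ)} (hS : ∀ p ∈ G, SierpMem p) {m : ℕ}
    (hm : G.card ≤ m) (i a b : ℕ) : ∃ r < 3 ^ i, ∃ r' < 3 ^ i,
      #{p ∈ G | inBox (i + 1) a b p ∧ (p.1 % 3 ^ i = r ∨ p.2 % 3 ^ i = r')} ≤
        2 * min (16 * 2 ^ i) (m / 3 ^ i) := by
  have hq : 0 < 3 ^ i := by positivity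
  set G' := {p ∈ G | inBox (i + 1) a b p}
  have hG'S : ∀ p ∈ G', SierpMem p := fun p hp => hS p (mem_filter.1 hp).1
  have hG'box : ∀ p ∈ G', inBox (i + 1) a b p := fun p hp => (mem_filter.1 hp).2
  have hG'm : #G' ≤ m := (card_filter_le _ _).trans hm
  have hline {f : ℕ × ℕ → ℕ} {r : ℕ}
      (havg : 3 ^ i * #{p ∈ G' | f p % 3 ^ i = r} ≤ #G')
      (hrep : #{p ∈ G' | f p % 3 ^ i = r} ≤ #{p ∈ G' | f p % 3 ^ i = ternaryRepunit i})
      (hcount : #{p ∈ G' | f p % 3 ^ i = ternaryRepunit i} ≤ 16 * 2 ^ i) :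
      #{p ∈ G' | f p % 3 ^ i = r} ≤ min (16 * 2 ^ i) (m / 3 ^ i) :=
    le_min (hrep.trans hcount) ((Nat.le_div_iff_mul_le hq).2 (by linarith))
  obtain ⟨r, hr, havg, hmin⟩ := exists_mod_eq_card_filter_le G' Prod.fst hq
  obtain ⟨r', hr', havg', hmin'⟩ := exists_mod_eq_card_filter_le G' Prod.snd hq
  refine ⟨r, hr, r', hr', ?_⟩
  calc _ = #({p ∈ G' | p.1 % 3 ^ i = r} ∪ {p ∈ G' | p.2 % 3 ^ i = r'}) := by
        rw [← filter_or, filter_filter]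
    _ ≤ #{p ∈ G' | p.1 % 3 ^ i = r} + #{p ∈ G' | p.2 % 3 ^ i = r'} := card_union_le _ _
    _ ≤ 2 * min (16 * 2 ^ i) (m / 3 ^ i) := by
      have := hline havg (hmin _ (ternaryRepunit_lt_pow i))
        (card_filter_fst_mod_eq_ternaryRepunit_le hG'S hG'box)
      have := hline havg' (hmin' _ (ternaryRepunit_lt_pow i))
        (card_filter_snd_mod_eq_ternaryRepunit_le hG'S hG'box)
      omega

lemma inBox_gridStart {i r r' : ℕ} (hr : r ≤ 3 ^ i) (hr' : r' ≤ 3 ^ i) (p : ℕ × ℕ) :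
    inBox i (gridStart (3 ^ i) r p.1) (gridStart (3 ^ i) r' p.2) p :=
  ⟨gridStart_le hr _, lt_gridStart_add (by positivity) _ _,
    gridStart_le hr' _, lt_gridStart_add (by positivity) _ _⟩

theorem exists_cut_inBox {G : Finset (ℕ × ℕ)} (hS : ∀ p ∈ G, SierpMem p) {m : ℕ}
    (hm : G.card ≤ m) (hm2 : 2 ≤ m) (i a b : ℕ) :
    ∃ T ⊆ G, T.card ≤ 2 * cutBudget m i ∧
      ∀ A : Set (ℕ × ℕ), A ⊆ ↑G \ ↑T → (∀ p ∈ A, inBox i a b p) →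
        (SierpGraph.induce A).Preconnected → 2 * A.ncard ≤ m := by
  induction i generalizing a b with
  | zero =>
    refine ⟨∅, empty_subset _, by simp, fun A _ hbox _ => ?_⟩
    have hA : A ⊆ {(a, b)} := fun p hp => by
      obtain ⟨h1, h2, h3, h4⟩ := hbox p hp
      simp only [pow_zero, Set.mem_singleton_iff] at h2 h4 ⊢
      ext <;> omega
    have := Set.ncard_le_ncard hA
    rw [Set.ncard_singleton] at this
    omega
  | succ i ih =>
    have hq : 0 < 3 ^ i := by positivity
    obtain ⟨r, hr, r', hr', hcut⟩ := exists_gridLines_card_le hS hm i a b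
    set piece : ℕ × ℕ → ℕ × ℕ :=
      fun p => (gridStart (3 ^ i) r p.1, gridStart (3 ^ i) r' p.2)
    obtain ⟨w₀, hw₀⟩ := exists_forall_ne_two_mul_card_filter_le G piece
    obtain ⟨T, hTG, hTcard, hT⟩ := ih w₀.1 w₀.2
    refine ⟨{p ∈ G | inBox (i + 1) a b p ∧ (p.1 % 3 ^ i = r ∨ p.2 % 3 ^ i = r')} ∪ T,
      union_subset (filter_subset _ _) hTG, ?_, fun A hAG hbox hA => ?_⟩
    · calc _ ≤ _ := card_union_le _ _
        _ ≤ 2 * cutBudget m (i + 1) := by rw [cutBudget, sum_range_succ, ← cutBudget]; omega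
    rcases A.eq_empty_or_nonempty with rfl | ⟨p, hp⟩
    · simp
    have havoid (z) (hz : z ∈ A) : z.1 % 3 ^ i ≠ r ∧ z.2 % 3 ^ i ≠ r' := by
      have := (hAG hz).2
      simp only [coe_union, coe_filter, Set.mem_union, Set.mem_ofPred_eq, not_or] at this
      exact not_or.1 fun h => this.1 ⟨(hAG hz).1, hbox z hz, h⟩
    have hpiece (z) (hz : z ∈ A) : piece z = piece p := Prod.ext
      (SimpleGraph.gridStart_eq_of_preconnected (fun _ _ => sierpGraph_adj_fst_le) hA hq hr
        (fun z hz => (havoid z hz).1) hp hz)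
      (SimpleGraph.gridStart_eq_of_preconnected (fun _ _ => sierpGraph_adj_snd_le) hA hq hr'
        (fun z hz => (havoid z hz).2) hp hz)
    by_cases hp₀ : piece p = w₀
    · refine hT A (fun z hz => ⟨(hAG hz).1, fun h => (hAG hz).2 (by simp [h])⟩)
        (fun z hz => ?_) hA
      rw [← hp₀, ← hpiece z hz]
      exact inBox_gridStart hr.le hr'.le z
    · have hsub : A ⊆ ↑{z ∈ G | piece z = piece p} := fun z hz => by
        simpa using ⟨(hAG hz).1, hpiece z hz⟩
      have := Set.ncard_le_ncard hsub
      rw [Set.ncard_coe_finset] at this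
      have := hw₀ _ hp₀
      omega

theorem cutHalf_sierpGraph_le (G : Finset (ℕ × ℕ)) (hS : ∀ p ∈ G, SierpMem p) :
    cutHalf SierpGraph G ≤ 72 * 2 ^ Nat.log 6 G.card := by
  rcases lt_or_ge G.card 2 with hG | hG
  · have := cutHalf_le_card_of_isHalfCutSet (isHalfCutSet_self SierpGraph G)
    have := Nat.one_le_two_pow (n := Nat.log 6 G.card)
    omega
  obtain ⟨v₀, hv₀⟩ := SimpleGraph.exists_forall_lt_two_mul_ncard_compIn_eq SierpGraph G
  have hKsub := SierpGraph.compIn_subset (↑G) v₀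
  have hKfin := G.finite_toSet.subset hKsub
  have hKcard : (SierpGraph.compIn G v₀).ncard < 3 ^ G.card := by
    have := Set.ncard_le_ncard hKsub G.finite_toSet
    rw [Set.ncard_coe_finset] at this
    exact this.trans_lt (Nat.lt_pow_self (by norm_num))
  obtain ⟨a, ha⟩ := SimpleGraph.exists_forall_le_lt_add_ncard_of_preconnected
    (fun _ _ => sierpGraph_adj_fst_le) (SierpGraph.preconnected_induce_compIn G v₀) hKfin
  obtain ⟨b, hb⟩ := SimpleGraph.exists_forall_le_lt_add_ncard_of_preconnected
    (fun _ _ => sierpGraph_adj_snd_le) (SierpGraph.preconnected_induce_compIn G v₀) hKfin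
  obtain ⟨T, hTG, hTcard, hT⟩ := exists_cut_inBox hS le_rfl hG G.card a b
  have hhalf : IsHalfCutSet SierpGraph G T :=
    isHalfCutSet_of_forall_preconnected hTG v₀ hv₀ fun A hAK hAT hA =>
      hT A hAT (fun p hp => ⟨(ha p (hAK hp)).1, by linarith [(ha p (hAK hp)).2],
        (hb p (hAK hp)).1, by linarith [(hb p (hAK hp)).2]⟩) hA
  calc cutHalf SierpGraph G ≤ T.card := cutHalf_le_card_of_isHalfCutSet hhalf
    _ ≤ 2 * (18 * 2 ^ (Nat.log 6 G.card + 1)) :=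
      hTcard.trans <| Nat.mul_le_mul_left _ <|
        cutBudget_le (Nat.lt_pow_succ_log_self (by norm_num) _) _
    _ = 72 * 2 ^ Nat.log 6 G.card := by ring

theorem sepHalf_sierpGraph_le (n : ℕ) :
    sepHalf SierpGraph {p | SierpMem p} n ≤ 72 * 2 ^ Nat.log 6 n := by
  refine csSup_le ⟨_, ∅, by simp, by simp, rfl⟩ ?_
  rintro _ ⟨G, hGS, hGn, rfl⟩
  exact (cutHalf_sierpGraph_le G hGS).trans
    (Nat.mul_le_mul_left _ (Nat.pow_le_pow_right (by norm_num) (Nat.log_mono_right hGn)))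

lemma two_pow_log_six_le_rpow {n : ℕ} (hn : n ≠ 0) :
    (2 : ℝ) ^ Nat.log 6 n ≤ (n : ℝ) ^ (Real.log 2 / Real.log 6) := by
  have h6 : (6 : ℝ) ^ (Real.log 2 / Real.log 6) = 2 := by
    rw [Real.log_div_log]
    exact Real.rpow_logb (by norm_num) (by norm_num) (by norm_num)
  calc (2 : ℝ) ^ Nat.log 6 n = ((6 : ℝ) ^ (Real.log 2 / Real.log 6)) ^ Nat.log 6 n := by rw [h6]
    _ = ((6 : ℝ) ^ Nat.log 6 n) ^ (Real.log 2 / Real.log 6) := by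
      rw [← Real.rpow_mul_natCast (by norm_num), mul_comm, Real.rpow_natCast_mul (by norm_num)]
    _ ≤ (n : ℝ) ^ (Real.log 2 / Real.log 6) :=
      Real.rpow_le_rpow (by positivity) (by exact_mod_cast Nat.pow_log_le_self 6 hn)
        (div_nonneg (Real.log_nonneg (by norm_num)) (Real.log_nonneg (by norm_num)))

/-- Upper bound on the separation profile of the infinite Sierpinski graph:
`sep¹ᐟ²_S(n) ≼ n^(log 2 / log 6)`. -/
theorem sierpinski_sep_upper :
    ∃ C : ℝ, 0 < C ∧ ∀ n : ℕ, 1 ≤ n →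
      (sepHalf SierpGraph {p : ℕ × ℕ | SierpMem p} n : ℝ) ≤
        C * (n : ℝ) ^ (Real.log 2 / Real.log 6) := by
  refine ⟨72, by norm_num, fun n hn => ?_⟩
  calc (sepHalf SierpGraph {p : ℕ × ℕ | SierpMem p} n : ℝ) ≤ 72 * 2 ^ Nat.log 6 n := by
        exact_mod_cast sepHalf_sierpGraph_le n
    _ ≤ 72 * (n : ℝ) ^ (Real.log 2 / Real.log 6) := by
      gcongr
      exact two_pow_log_six_le_rpow (by omega)
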